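/- The bicommutant of the C*-algebra D generated by the identity and all projections A†_α A_α (over multi-indices α with entries in {0,1,...,n}) equals the von Neumann algebra of all operators diagonal with respect to the canonical orthonormal basis of the weakly monotone Fock space. -/

import Mathlib

open scoped Classical

/-- `i` is the top (leftmost) index of the weakly monotone basis tensor labelled
by the multiplicity function `k : Fin n → ℕ` (the basis vector
`e_n^{k (n-1)} ⊗ ⋯ ⊗ e_1^{k 0}`, the vacuum `Ω` corresponding to `k = 0`). -/
def WMTop {n : ℕ} (i : Fin n) (k : Fin n → ℕ) : Prop :=
  0 < k i ∧ ∀ j, i < j → k j = 0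

/-- One may create `e i` on the left of the basis tensor labelled by `k`:
every index strictly above `i` has multiplicity zero. -/
def WMCanCreate {n : ℕ} (i : Fin n) (k : Fin n → ℕ) : Prop :=
  ∀ j, i < j → k j = 0

/-- Decrease by one the multiplicity of `e i`. -/
def wmDec {n : ℕ} (k : Fin n → ℕ) (i : Fin n) : Fin n → ℕ :=
  Function.update k i (k i - 1)

/-- Increase by one the multiplicity of `e i`. -/
def wmInc {n : ℕ} (k : Fin n → ℕ) (i : Fin n) : Fin n → ℕ :=
  Function.update k i (k i + 1)

section Aux
variable {ι : Type*} {F : Type*} [NormedAddCommGroup F] [InnerProductSpace ℂ F]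
  [CompleteSpace F]

local notation "⟪" x ", " y "⟫" => @inner ℂ _ _ x y

omit [CompleteSpace F] in
lemma coord_ext (E : HilbertBasis ι ℂ F) {x y : F}
    (h : ∀ i, ⟪E i, x⟫ = ⟪E i, y⟫) : x = y := by
  apply E.repr.injective
  ext i
  rw [E.repr_apply_apply, E.repr_apply_apply]
  exact h i

omit [CompleteSpace F] in
lemma clm_ext_basis (E : HilbertBasis ι ℂ F) {S T : F →L[ℂ] F}
    (h : ∀ i, S (E i) = T (E i)) : S = T := by
  have hs : Set.EqOn ⇑S ⇑T (Set.range ⇑E) := by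
    rintro _ ⟨i, rfl⟩; exact h i
  have hspan := LinearMap.eqOn_span' (f := (S : F →ₗ[ℂ] F)) (g := (T : F →ₗ[ℂ] F)) hs
  have hd : Dense ((Submodule.span ℂ (Set.range ⇑E) : Submodule ℂ F) : Set F) := by
    rw [Submodule.dense_iff_topologicalClosure_eq_top]
    exact E.dense_span
  have hfun : ⇑S = ⇑T := Continuous.ext_on hd S.continuous T.continuous hspan
  ext x
  exact congrFun hfun x

lemma E_ite (E : HilbertBasis ι ℂ F) (a b : ι) :
    ⟪E a, E b⟫ = if a = b then (1 : ℂ) else 0 :=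
  orthonormal_iff_ite.mp E.orthonormal a b

lemma E_inj (E : HilbertBasis ι ℂ F) : Function.Injective ⇑E :=
  E.orthonormal.linearIndependent.injective

lemma E_ne_zero (E : HilbertBasis ι ℂ F) (a : ι) : E a ≠ 0 :=
  E.orthonormal.ne_zero a

/-- If `P` maps basis vectors injectively to basis vectors or zero,
then `star P * P` is a diagonal projection. -/
lemma stage2 (E : HilbertBasis ι ℂ F) (P : F →L[ℂ] F) (s : Set ι) (f : ι → ι)
    (h : ∀ m, P (E m) = if m ∈ s then E (f m) else 0) (hinj : Set.InjOn f s) :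
    ∀ m, (star P * P) (E m) = if m ∈ s then E m else 0 := by
  intro m
  rw [ContinuousLinearMap.mul_apply, h m]
  by_cases hm : m ∈ s
  · rw [if_pos hm, if_pos hm]
    apply coord_ext E
    intro j
    rw [ContinuousLinearMap.star_eq_adjoint, ContinuousLinearMap.adjoint_inner_right,
      h j, E_ite]
    by_cases hj : j ∈ s
    · rw [if_pos hj, E_ite]
      by_cases hjm : j = m
      · subst hjm; rw [if_pos rfl, if_pos rfl]
      · rw [if_neg hjm, if_neg (fun hf => hjm (hinj hj hm hf))]
    · rw [if_neg hj, inner_zero_left, if_neg (fun hf => hj (by rw [hf]; exact hm))]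
  · rw [if_neg hm, if_neg hm, map_zero]
end Aux
section Main
variable {n : ℕ} {F : Type*} [NormedAddCommGroup F] [InnerProductSpace ℂ F]
  [CompleteSpace F]

local notation "⟪" x ", " y "⟫" => @inner ℂ _ _ x y

lemma wmInc_wmDec {n : ℕ} (k : Fin n → ℕ) (i : Fin n) (h : 0 < k i) :
    wmInc (wmDec k i) i = k := by
  unfold wmInc wmDec
  rw [Function.update_idem, Function.update_self, Nat.sub_add_cancel h,
    Function.update_eq_self]

lemma struct (E : HilbertBasis (Fin n → ℕ) ℂ F)
    (A : Fin n → F →L[ℂ] F)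
    (hA : ∀ i k, A i (E k) = if WMTop i k then E (wmDec k i) else 0)
    (B : Fin (n + 1) → F →L[ℂ] F)
    (hB0 : ∀ x : F, B 0 x = (inner ℂ (E (0 : Fin n → ℕ)) x : ℂ) • E (0 : Fin n → ℕ))
    (hBs : ∀ i : Fin n, B i.succ = A i)
    (β : List (Fin (n + 1))) :
    ∃ (s : Set (Fin n → ℕ)) (f : (Fin n → ℕ) → (Fin n → ℕ)),
      (∀ m, ((β.map B).prod) (E m) = if m ∈ s then E (f m) else 0) ∧
      Set.InjOn f s := by
  induction β with
  | nil =>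
    refine ⟨Set.univ, id, fun m => ?_, fun a _ b _ h => h⟩
    simp
  | cons i β ih =>
    obtain ⟨s, f, hf, hinj⟩ := ih
    have hmul : ∀ m, (((i :: β).map B).prod) (E m) = B i (((β.map B).prod) (E m)) := by
      intro m
      rw [List.map_cons, List.prod_cons, ContinuousLinearMap.mul_apply]
    rcases Fin.eq_zero_or_eq_succ i with hi | ⟨j, hj⟩
    · subst hi
      refine ⟨{m | m ∈ s ∧ f m = 0}, fun _ => 0, fun m => ?_, fun a ha b hb _ =>
        hinj ha.1 hb.1 (ha.2.trans hb.2.symm)⟩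
      rw [hmul, hf m]
      by_cases hm : m ∈ s
      · rw [if_pos hm, hB0, E_ite]
        by_cases h0 : f m = 0
        · rw [if_pos h0.symm, if_pos ⟨hm, h0⟩, one_smul]
        · rw [if_neg (fun h => h0 h.symm), if_neg (fun h => h0 h.2), zero_smul]
      · rw [if_neg hm, map_zero, if_neg (fun h => hm h.1)]
    · subst hj
      refine ⟨{m | m ∈ s ∧ WMTop j (f m)}, fun m => wmDec (f m) j, fun m => ?_,
        fun a ha b hb h => ?_⟩
      · rw [hmul, hf m, hBs j]
        by_cases hm : m ∈ s
        · rw [if_pos hm, hA]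
          by_cases ht : WMTop j (f m)
          · rw [if_pos ht, if_pos ⟨hm, ht⟩]
          · rw [if_neg ht, if_neg (fun h => ht h.2)]
        · rw [if_neg hm, map_zero, if_neg (fun h => hm h.1)]
      · have h' : wmDec (f a) j = wmDec (f b) j := h
        have : f a = f b := by
          rw [← wmInc_wmDec (f a) j ha.2.1, ← wmInc_wmDec (f b) j hb.2.1, h']
        exact hinj ha.1 hb.1 this
end Main
section Ann
variable {n : ℕ} {F : Type*} [NormedAddCommGroup F] [InnerProductSpace ℂ F]
  [CompleteSpace F]

/-- The list of annihilation indices `[0-block, 1-block, …, (i-1)-block]`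
(the rightmost block acts first). -/
def annAux (n : ℕ) (k : Fin n → ℕ) : ℕ → List (Fin n)
  | 0 => []
  | i + 1 => if h : i < n then annAux n k i ++ List.replicate (k ⟨i, h⟩) ⟨i, h⟩
             else annAux n k i

lemma annAux_congr (k k' : Fin n → ℕ) (i : ℕ)
    (h : ∀ j : Fin n, (j : ℕ) < i → k j = k' j) : annAux n k i = annAux n k' i := by
  induction i with
  | zero => rfl
  | succ i ih =>
    have hih := ih (fun j hj => h j (Nat.lt_succ_of_lt hj))
    unfold annAux
    split
    · rw [hih, h ⟨i, ‹i < n›⟩ (Nat.lt_succ_self i)]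
    · exact hih

omit [CompleteSpace F] in
lemma rep_spec (E : HilbertBasis (Fin n → ℕ) ℂ F)
    (A : Fin n → F →L[ℂ] F)
    (hA : ∀ i k, A i (E k) = if WMTop i k then E (wmDec k i) else 0)
    (c : ℕ) (i : Fin n) (k : Fin n → ℕ)
    (htop : ∀ j, i < j → k j = 0) (hc : c ≤ k i) :
    ((List.replicate c (A i)).prod) (E k) = E (Function.update k i (k i - c)) := by
  induction c with
  | zero =>
    simp [Function.update_eq_self]
  | succ c ih =>
    rw [List.replicate_succ, List.prod_cons, ContinuousLinearMap.mul_apply,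
      ih (Nat.le_of_succ_le hc), hA]
    have hpos : 0 < Function.update k i (k i - c) i := by
      rw [Function.update_self]
      omega
    have htop' : ∀ j, i < j → Function.update k i (k i - c) j = 0 := by
      intro j hj
      rw [Function.update_of_ne (Fin.ne_of_gt hj)]
      exact htop j hj
    rw [if_pos ⟨hpos, htop'⟩]
    unfold wmDec
    rw [Function.update_idem, Function.update_self]
    have hcc : k i - c - 1 = k i - (c + 1) := by omega
    rw [hcc]

omit [CompleteSpace F] in
lemma ann_spec (E : HilbertBasis (Fin n → ℕ) ℂ F)
    (A : Fin n → F →L[ℂ] F)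
    (hA : ∀ i k, A i (E k) = if WMTop i k then E (wmDec k i) else 0) :
    ∀ (i : ℕ), i ≤ n → ∀ (k : Fin n → ℕ), (∀ j : Fin n, i ≤ (j : ℕ) → k j = 0) →
      (((annAux n k i).map A).prod) (E k) = E 0 := by
  intro i
  induction i with
  | zero =>
    intro _ k hk
    have : k = 0 := funext fun j => hk j (Nat.zero_le _)
    subst this
    simp [annAux]
  | succ i ih =>
    intro hi k hk
    have hin : i < n := hi
    set i' : Fin n := ⟨i, hin⟩ with hi'
    have : annAux n k (i + 1) = annAux n k i ++ List.replicate (k i') i' := by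
      simp only [annAux, dif_pos hin]
      rfl
    rw [this, List.map_append, List.prod_append, ContinuousLinearMap.mul_apply,
      List.map_replicate]
    have htop : ∀ j, i' < j → k j = 0 := fun j hj => hk j (Nat.succ_le_of_lt hj)
    rw [rep_spec E A hA (k i') i' k htop le_rfl]
    set k' := Function.update k i' (k i' - k i') with hk'
    have hk0 : k i' - k i' = 0 := Nat.sub_self _
    have hcongr : annAux n k i = annAux n k' i := by
      apply annAux_congr
      intro j hj
      have hne : j ≠ i' := by
        intro hji
        rw [hji] at hj
        exact Nat.lt_irrefl i hj
      rw [hk', Function.update_of_ne hne]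
    have hk'0 : ∀ j : Fin n, i ≤ (j : ℕ) → k' j = 0 := by
      intro j hj
      rcases eq_or_ne j i' with rfl | hne
      · rw [hk', Function.update_self, hk0]
      · rw [hk', Function.update_of_ne hne]
        apply hk
        have : (j : ℕ) ≠ i := fun h => hne (Fin.ext h)
        omega
    rw [hcongr]
    exact ih (Nat.le_of_succ_le hi) k' hk'0
end Ann
theorem bicommutant_of_diagonal_algebra
    {n : ℕ} {F : Type*} [NormedAddCommGroup F] [InnerProductSpace ℂ F]
    [CompleteSpace F] (E : HilbertBasis (Fin n → ℕ) ℂ F)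
    (A Ad : Fin n → F →L[ℂ] F)
    (hAdj : ∀ i, Ad i = ContinuousLinearMap.adjoint (A i))
    (hA : ∀ i k, A i (E k) = if WMTop i k then E (wmDec k i) else 0)
    (hAc : ∀ i k, Ad i (E k) = if WMCanCreate i k then E (wmInc k i) else 0)
    (B : Fin (n + 1) → F →L[ℂ] F)
    (hB0 : ∀ x : F, B 0 x = (inner ℂ (E (0 : Fin n → ℕ)) x : ℂ) • E (0 : Fin n → ℕ))
    (hBs : ∀ i : Fin n, B i.succ = A i)
    (D : StarSubalgebra ℂ (F →L[ℂ] F))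
    (hD : D = (StarAlgebra.adjoin ℂ
      ({1} ∪ {T | ∃ α : List (Fin (n + 1)),
        T = star ((α.map B).prod) * (α.map B).prod})).topologicalClosure)
    :
    Set.centralizer (Set.centralizer (D : Set (F →L[ℂ] F)))
      = {T : F →L[ℂ] F | ∀ k : Fin n → ℕ, ∃ c : ℂ, T (E k) = c • E k} := by
  set Diag : Set (F →L[ℂ] F) :=
    {T : F →L[ℂ] F | ∀ k : Fin n → ℕ, ∃ c : ℂ, T (E k) = c • E k} with hDiag
  -- Step 1: projections onto basis vectors belong to `D`
  have hQ : ∀ k : Fin n → ℕ, ∃ Q : F →L[ℂ] F, Q ∈ D ∧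
      (∀ m, Q (E m) = if m = k then E m else 0) := by
    intro k
    set β' : List (Fin (n + 1)) := (annAux n k n).map Fin.succ with hβ'
    have hP'A : (β'.map B).prod = (((annAux n k n)).map A).prod := by
      rw [hβ', List.map_map]
      congr 1
      exact List.map_congr_left fun i _ => hBs i
    have hP'k : (β'.map B).prod (E k) = E 0 := by
      rw [hP'A]
      exact ann_spec E A hA n le_rfl k (fun j hj => absurd j.isLt (by omega))
    obtain ⟨s, f, hf, hinj⟩ := struct E A hA B hB0 hBs β'
    have hks : k ∈ s ∧ f k = 0 := by
      have h1 := (hf k).symm.trans hP'k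
      by_cases hk : k ∈ s
      · rw [if_pos hk] at h1
        exact ⟨hk, E_inj E h1⟩
      · rw [if_neg hk] at h1
        exact absurd h1.symm (E_ne_zero E 0)
    set α : List (Fin (n + 1)) := (0 : Fin (n + 1)) :: β' with hα
    set P : F →L[ℂ] F := (α.map B).prod with hPdef
    have hP : ∀ m, P (E m) = if m ∈ ({k} : Set (Fin n → ℕ)) then E 0 else 0 := by
      intro m
      rw [hPdef, hα, List.map_cons, List.prod_cons, ContinuousLinearMap.mul_apply, hf m]
      by_cases hm : m ∈ s
      · rw [if_pos hm, hB0, E_ite]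
        by_cases h0 : f m = 0
        · rw [if_pos h0.symm, one_smul,
            if_pos (show m ∈ ({k} : Set (Fin n → ℕ)) from
              hinj hm hks.1 (h0.trans hks.2.symm))]
        · rw [if_neg (fun h => h0 h.symm), zero_smul, if_neg ?_]
          intro hmk
          rw [Set.mem_singleton_iff] at hmk
          exact h0 (hmk ▸ hks.2)
      · rw [if_neg hm, map_zero, if_neg ?_]
        intro hmk
        rw [Set.mem_singleton_iff] at hmk
        exact hm (hmk ▸ hks.1)
    refine ⟨star P * P, ?_, ?_⟩
    · rw [hD]
      apply StarSubalgebra.le_topologicalClosure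
      apply StarAlgebra.subset_adjoin
      exact Or.inr ⟨α, rfl⟩
    · intro m
      have h2 := stage2 E P {k} (fun _ => 0)
        (fun m' => by
          rw [hP m']
          by_cases h : m' ∈ ({k} : Set (Fin n → ℕ))
          · rw [if_pos h, if_pos h]
          · rw [if_neg h, if_neg h])
        (fun a ha b hb _ => ha.trans hb.symm) m
      by_cases h : m = k
      · rw [if_pos h]
        rw [if_pos (show m ∈ ({k} : Set (Fin n → ℕ)) from h)] at h2
        exact h2
      · rw [if_neg h]
        rw [if_neg (show m ∉ ({k} : Set (Fin n → ℕ)) from h)] at h2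
        exact h2
  -- Step 2 : D ⊆ Diag
  have hclosed : IsClosed Diag := by
    have : Diag = ⋂ k : Fin n → ℕ,
        ((fun T : F →L[ℂ] F => T (E k)) ⁻¹' ((ℂ ∙ E k : Submodule ℂ F) : Set F)) := by
      ext T
      simp only [hDiag, Set.mem_setOf_eq, Set.mem_iInter, Set.mem_preimage,
        SetLike.mem_coe, Submodule.mem_span_singleton]
      exact ⟨fun h k => (h k).imp (fun c hc => hc.symm),
        fun h k => (h k).imp (fun c hc => hc.symm)⟩
    rw [this]
    exact isClosed_iInter fun k =>
      IsClosed.preimage (ContinuousLinearMap.apply ℂ F (E k)).continuous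
        (Submodule.closed_of_finiteDimensional _)
  have hstar : ∀ T : F →L[ℂ] F, T ∈ Diag → star T ∈ Diag := by
    intro T hT
    choose c hc using hT
    intro k
    refine ⟨(starRingEnd ℂ) (c k), ?_⟩
    apply coord_ext E
    intro j
    rw [ContinuousLinearMap.star_eq_adjoint, ContinuousLinearMap.adjoint_inner_right,
      hc j, inner_smul_left, inner_smul_right, E_ite]
    by_cases hjk : j = k
    · subst hjk; simp
    · simp [hjk]
  have hDdiag : (D : Set (F →L[ℂ] F)) ⊆ Diag := by
    rw [hD, StarSubalgebra.topologicalClosure_coe]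
    apply closure_minimal ?_ hclosed
    intro T hT
    rw [SetLike.mem_coe] at hT
    induction hT using StarAlgebra.adjoin_induction with
    | mem x hx =>
      rcases hx with hx | ⟨α, rfl⟩
      · rw [Set.mem_singleton_iff] at hx
        subst hx
        exact fun k => ⟨1, by simp⟩
      · obtain ⟨s, f, hf, hinj⟩ := struct E A hA B hB0 hBs α
        intro k
        have h2 := stage2 E ((α.map B).prod) s f hf hinj k
        by_cases hk : k ∈ s
        · exact ⟨1, by rw [h2, if_pos hk, one_smul]⟩
        · exact ⟨0, by rw [h2, if_neg hk, zero_smul]⟩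
    | algebraMap r =>
      exact fun k => ⟨r, by simp [Algebra.algebraMap_eq_smul_one]⟩
    | add x y hx hy ihx ihy =>
      intro k
      obtain ⟨c, hc⟩ := ihx k
      obtain ⟨d, hd⟩ := ihy k
      exact ⟨c + d, by rw [ContinuousLinearMap.add_apply, hc, hd, add_smul]⟩
    | mul x y hx hy ihx ihy =>
      intro k
      obtain ⟨c, hc⟩ := ihx k
      obtain ⟨d, hd⟩ := ihy k
      exact ⟨d * c, by rw [ContinuousLinearMap.mul_apply, hd, map_smul, hc,
        smul_smul]⟩
    | star x hx ih => exact hstar x ih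
  -- Step 3 : diagonal operators commute
  have hcomm : ∀ S T' : F →L[ℂ] F, S ∈ Diag → T' ∈ Diag → S * T' = T' * S := by
    intro S T' hS hT'
    apply clm_ext_basis E
    intro k
    obtain ⟨c, hc⟩ := hS k
    obtain ⟨d, hd⟩ := hT' k
    rw [ContinuousLinearMap.mul_apply, ContinuousLinearMap.mul_apply, hc, hd,
      map_smul, map_smul, hc, hd, smul_smul, smul_smul, mul_comm]
  -- rank-one form of the projections
  have hQR : ∀ (k : Fin n → ℕ) (Q : F →L[ℂ] F),
      (∀ m, Q (E m) = if m = k then E m else 0) →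
      Q = (innerSL ℂ (E k)).smulRight (E k) := by
    intro k Q hQm
    apply clm_ext_basis E
    intro m
    rw [hQm m, ContinuousLinearMap.smulRight_apply, innerSL_apply_apply, E_ite]
    by_cases hmk : m = k
    · subst hmk; rw [if_pos rfl, if_pos rfl, one_smul]
    · rw [if_neg hmk, if_neg (fun h => hmk h.symm), zero_smul]
  -- Main equality
  ext T
  constructor
  · intro hT
    intro k
    obtain ⟨Q, hQD, hQm⟩ := hQ k
    have hQdiag : Q ∈ Diag := by
      intro m
      by_cases hmk : m = k
      · exact ⟨1, by rw [hQm m, if_pos hmk, one_smul]⟩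
      · exact ⟨0, by rw [hQm m, if_neg hmk, zero_smul]⟩
    have hQC : Q ∈ Set.centralizer (D : Set (F →L[ℂ] F)) := by
      intro S hS
      exact hcomm S Q (hDdiag hS) hQdiag
    have h1 : Q * T = T * Q := hT Q hQC
    have h2 : T (E k) = Q (T (E k)) := by
      calc T (E k) = (T * Q) (E k) := by
            rw [ContinuousLinearMap.mul_apply, hQm k, if_pos rfl]
        _ = (Q * T) (E k) := by rw [h1]
        _ = Q (T (E k)) := rfl
    rw [hQR k Q hQm, ContinuousLinearMap.smulRight_apply, innerSL_apply_apply] at h2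
    exact ⟨_, h2⟩
  · intro hT S hS
    have hSdiag : S ∈ Diag := by
      intro k
      obtain ⟨Q, hQD, hQm⟩ := hQ k
      have h1 : Q * S = S * Q := hS Q hQD
      have h2 : S (E k) = Q (S (E k)) := by
        calc S (E k) = (S * Q) (E k) := by
              rw [ContinuousLinearMap.mul_apply, hQm k, if_pos rfl]
          _ = (Q * S) (E k) := by rw [← h1]
          _ = Q (S (E k)) := rfl
      rw [hQR k Q hQm, ContinuousLinearMap.smulRight_apply, innerSL_apply_apply] at h2
      exact ⟨_, h2⟩
    exact hcomm S T hSdiag hT
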